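/- Let G be an almost simple group with socle T and let R be a Sylow r-subgroup of G with R ∩ T ≠ 1. If R is contained in a unique maximal subgroup of G, then G/T is an r-group. -/

import Mathlib

/-!
Put `D = R ⊓ T`. Since `T` is normal, `D` is a Sylow `r`-subgroup of `T`, so the Frattini
argument gives `N_G(D) T = G`. As `D ≠ 1` and a nonabelian simple group is not an `r`-group,
`D` is not normal in `G`; hence `N_G(D)` is a proper subgroup containing `R`, so it lies in the
unique maximal subgroup `M` over `R`. Then `T ≰ M`, so `R T = G` and `G/T` is a quotient of `R`.
-/

namespace Subgroup

variable {G : Type*} [Group G]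

theorem relIndex_dvd_index_of_normal_right (H : Subgroup G) {N : Subgroup G} [N.Normal]
    [N.FiniteIndex] : H.relIndex N ∣ H.index := by
  -- both sides equal `(H ⊓ N).index`
  have key : H.relIndex N * N.index = N.relIndex H * H.index := by
    have h := relIndex_inf_mul_relIndex H N ⊤
    rwa [inf_top_eq, relIndex_top_right, relIndex_top_right,
      ← relIndex_mul_index (inf_le_left : H ⊓ N ≤ H), inf_relIndex_left] at h
  have hdvd : H.relIndex N * N.index ∣ H.index * N.index := by
    rw [key, mul_comm]
    exact mul_dvd_mul_left _ (N.relIndex_dvd_index_of_normal H)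
  exact Nat.dvd_of_mul_dvd_mul_right (Nat.pos_of_ne_zero FiniteIndex.index_ne_zero) hdvd

theorem le_normalizer_inf_of_normal (H : Subgroup G) {N : Subgroup G} [N.Normal] :
    H ≤ normalizer ((H ⊓ N : Subgroup G) : Set G) :=
  (le_inf le_normalizer le_normalizer_of_normal).trans inf_normalizer_le_normalizer_inf

end Subgroup

namespace Sylow

variable {p : ℕ} [Fact p.Prime] {G : Type*} [Group G] [Finite G]

noncomputable def subgroupOfNormal (P : Sylow p G) (N : Subgroup G) [N.Normal] : Sylow p N :=
  P.isPGroup'.comap_subtype.toSylow fun h ↦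
    P.not_dvd_index (h.trans ((P : Subgroup G).relIndex_dvd_index_of_normal_right))

theorem map_subgroupOfNormal (P : Sylow p G) (N : Subgroup G) [N.Normal] :
    (P.subgroupOfNormal N : Subgroup N).map N.subtype = (P : Subgroup G) ⊓ N :=
  Subgroup.subgroupOf_map_subtype _ _

theorem normalizer_inf_sup_eq_top (P : Sylow p G) (N : Subgroup G) [N.Normal] :
    Subgroup.normalizer (((P : Subgroup G) ⊓ N : Subgroup G) : Set G) ⊔ N = ⊤ := by
  rw [← map_subgroupOfNormal]
  exact normalizer_sup_eq_top _

end Sylow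

theorem IsPGroup.mul_comm_of_isSimpleGroup {p : ℕ} [Fact p.Prime] {G : Type*} [Group G]
    [Finite G] [IsSimpleGroup G] (hG : IsPGroup p G) (a b : G) : a * b = b * a :=
  have := hG.isNilpotent
  IsSimpleGroup.comm_iff_isSolvable.mpr inferInstance a b

theorem Subgroup.eq_bot_of_normal_of_isPGroup_of_le {p : ℕ} [Fact p.Prime] {G : Type*} [Group G]
    [Finite G] {N D : Subgroup G} (hN : IsSimpleGroup N) (hnonab : ∃ a b : N, a * b ≠ b * a)
    [D.Normal] (hD : IsPGroup p D) (hDN : D ≤ N) : D = ⊥ := by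
  rcases hN.eq_bot_or_eq_top_of_normal (D.subgroupOf N) inferInstance with hbot | htop
  · rwa [subgroupOf_eq_bot, disjoint_iff, inf_of_le_left hDN] at hbot
  · obtain ⟨a, b, hab⟩ := hnonab
    have hNp : IsPGroup p N := hD.to_le (subgroupOf_eq_top.mp htop)
    exact absurd (hNp.mul_comm_of_isSimpleGroup a b) hab

theorem sup_eq_top_of_existsUnique_coatom {α : Type*} [Lattice α] [OrderTop α] [IsCoatomic α]
    {a b c : α} (hu : ∃! m, IsCoatom m ∧ a ≤ m) (hab : a ≤ b) (hb : b ≠ ⊤) (hbc : b ⊔ c = ⊤) :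
    a ⊔ c = ⊤ := by
  obtain ⟨m, ⟨hm, -⟩, hmu⟩ := hu
  by_contra hac
  obtain ⟨m', hm', hacm'⟩ := (eq_top_or_exists_le_coatom (a ⊔ c)).resolve_left hac
  obtain ⟨mb, hmb, hbmb⟩ := (eq_top_or_exists_le_coatom b).resolve_left hb
  have hm'm : m' = m := hmu m' ⟨hm', le_sup_left.trans hacm'⟩
  have hmbm : mb = m := hmu mb ⟨hmb, hab.trans hbmb⟩
  subst hm'm hmbm
  exact hm.1 (top_unique (hbc ▸ sup_le hbmb (le_sup_right.trans hacm')))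

theorem IsPGroup.quotient_of_sup_eq_top {p : ℕ} {G : Type*} [Group G] {P N : Subgroup G}
    [N.Normal] (hP : IsPGroup p P) (hPN : P ⊔ N = ⊤) : IsPGroup p (G ⧸ N) := by
  have hmap : P.map (QuotientGroup.mk' N) = ⊤ := by
    rw [← Subgroup.map_top_of_surjective _ (QuotientGroup.mk'_surjective N), ← hPN,
      Subgroup.map_sup, QuotientGroup.map_mk'_self, sup_bot_eq]
  exact (hmap ▸ hP.map (QuotientGroup.mk' N)).of_equiv Subgroup.topEquiv

theorem stmt_15_general {G : Type*} [Group G] [Finite G] (T : Subgroup G) [T.Normal]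
    (hsimple : IsSimpleGroup ↥T) (hnonab : ∃ a b : ↥T, a * b ≠ b * a)
    {r : ℕ} (hr : r.Prime) (R : Sylow r G)
    (hRT : (R : Subgroup G) ⊓ T ≠ ⊥)
    (hu : ∃! H : Subgroup G, IsCoatom H ∧ (R : Subgroup G) ≤ H) :
    IsPGroup r (G ⧸ T) := by
  have := Fact.mk hr
  set D : Subgroup G := (R : Subgroup G) ⊓ T
  have hD : Subgroup.normalizer (D : Set G) ≠ ⊤ := fun htop ↦
    have := Subgroup.normalizer_eq_top_iff.mp htop
    hRT (Subgroup.eq_bot_of_normal_of_isPGroup_of_le hsimple hnonab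
      R.isPGroup'.to_inf_left inf_le_right)
  exact R.isPGroup'.quotient_of_sup_eq_top <| sup_eq_top_of_existsUnique_coatom hu
    ((R : Subgroup G).le_normalizer_inf_of_normal) hD (R.normalizer_inf_sup_eq_top T)

/-- Corollary 2.5: let `G` be an almost simple group with socle `T` and let `R` be a Sylow
`r`-subgroup of `G` with `R ⊓ T ≠ 1`. If `R` is contained in a unique maximal subgroup of
`G`, then `G/T` is an `r`-group. -/
theorem stmt_15 {G : Type*} [Group G] [Finite G] (T : Subgroup G) [T.Normal]
    (hsimple : IsSimpleGroup ↥T) (hnonab : ∃ a b : ↥T, a * b ≠ b * a)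
    (hcent : Subgroup.centralizer (T : Set G) = ⊥)
    {r : ℕ} (hr : r.Prime) (R : Sylow r G)
    (hRT : (R : Subgroup G) ⊓ T ≠ ⊥)
    (hu : ∃! H : Subgroup G, IsCoatom H ∧ (R : Subgroup G) ≤ H) :
    IsPGroup r (G ⧸ T) :=
  stmt_15_general T hsimple hnonab hr R hRT hu
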